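/- Let a_{11}, a_{22}, a_{33} be positive reals and a_{12} = a_{21}, a_{13} = a_{31}, a_{23} = a_{32} ∈ ℝ. Let C be the 3×3 real symmetric matrix with diagonal entries C_{ii} = a_{ii} and off-diagonal entries C_{ij} = −a_{ij}. Then for every r_1 ∈ ℕ and all x ∈ ℝ³: (A_1*)^{r_1} exp(−xᵀCx) = (1+a_{11})^{r_1/2} · H_{r_1}(S_1(x)) · exp(−xᵀCx), where S_1(x) = ((1+a_{11}) x_1 − a_{12} x_2 − a_{13} x_3) / √(1+a_{11}). -/

import Mathlib

/-- The physicists' Hermite polynomial `H_n(x) = (-1)^n e^{x^2} (d^n/dx^n) e^{-x^2}`. -/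
noncomputable def Hpoly (n : ℕ) (x : ℝ) : ℝ :=
  (-1 : ℝ) ^ n * Real.exp (x ^ 2) * iteratedDeriv n (fun y => Real.exp (-(y ^ 2))) x

/-- Partial derivative in the `j`-th coordinate of a function on `ℝ³`. -/
noncomputable def pd (j : Fin 3) (f : (Fin 3 → ℝ) → ℝ) : (Fin 3 → ℝ) → ℝ :=
  fun x => deriv (fun t => f (Function.update x j t)) (x j)

/-- The creation operator `A_j* f = -∂f/∂x_j + 2 x_j f` on functions on `ℝ³`. -/
noncomputable def creation (j : Fin 3) (f : (Fin 3 → ℝ) → ℝ) : (Fin 3 → ℝ) → ℝ :=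
  fun x => -(pd j f x) + 2 * x j * f x

/-!
`A₁*` only sees the first coordinate, along which `e^{-xᵀCx}` is a Gaussian
`e^{-(a₁₁ t² - 2βt + c)}`. The Hermite recursion `H_n' = 2s H_n - H_{n+1}` shows that
`A₁*` maps `H_n(S₁(x)) e^{-xᵀCx}` to `√(1 + a₁₁) H_{n+1}(S₁(x)) e^{-xᵀCx}`: the slope
`(1 + a₁₁)/√(1 + a₁₁)` of `S₁` is exactly what makes the `2x₁` terms cancel.
-/

open Real Function

lemma hasDerivAt_iteratedDeriv_gaussian (n : ℕ) (s : ℝ) :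
    HasDerivAt (iteratedDeriv n fun y : ℝ => exp (-(y ^ 2)))
      (iteratedDeriv (n + 1) (fun y : ℝ => exp (-(y ^ 2))) s) s := by
  have hsmooth : ContDiff ℝ ⊤ fun y : ℝ => exp (-(y ^ 2)) := by fun_prop
  rw [iteratedDeriv_succ]
  exact (hsmooth.differentiable_iteratedDeriv n (by simp)).differentiableAt.hasDerivAt

lemma Hpoly_zero (s : ℝ) : Hpoly 0 s = 1 := by
  simp [Hpoly, ← exp_add]

lemma hasDerivAt_Hpoly (n : ℕ) (s : ℝ) :
    HasDerivAt (Hpoly n) (2 * s * Hpoly n s - Hpoly (n + 1) s) s := by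
  have hexp : HasDerivAt (fun y : ℝ => exp (y ^ 2)) (exp (s ^ 2) * (2 * s ^ 1)) s :=
    (hasDerivAt_pow 2 s).exp
  refine ((hexp.const_mul ((-1 : ℝ) ^ n)).mul
    (hasDerivAt_iteratedDeriv_gaussian n s)).congr_deriv ?_
  simp only [Hpoly, pow_succ]
  ring

noncomputable def hermiteGaussian (a β c : ℝ) (n : ℕ) (t : ℝ) : ℝ :=
  Hpoly n (((1 + a) * t - β) / √(1 + a)) * exp (-(a * t ^ 2 - 2 * β * t + c))

lemma hasDerivAt_hermiteGaussian {a : ℝ} (ha : 0 < 1 + a) (β c : ℝ) (n : ℕ) (t : ℝ) :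
    HasDerivAt (hermiteGaussian a β c n)
      (2 * t * hermiteGaussian a β c n t - √(1 + a) * hermiteGaussian a β c (n + 1) t) t := by
  have hS : HasDerivAt (fun t => ((1 + a) * t - β) / √(1 + a)) ((1 + a) / √(1 + a)) t := by
    simpa using (((hasDerivAt_id t).const_mul (1 + a)).sub_const β).div_const √(1 + a)
  have hq : HasDerivAt (fun t => a * t ^ 2 - 2 * β * t + c) (a * (2 * t) - 2 * β) t := by
    simpa using ((((hasDerivAt_pow 2 t).const_mul a).sub
      ((hasDerivAt_id t).const_mul (2 * β))).add_const c)
  refine (((hasDerivAt_Hpoly n _).comp t hS).mul hq.neg.exp).congr_deriv ?_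
  have hsqrt : √(1 + a) ≠ 0 := (sqrt_pos.mpr ha).ne'
  simp only [hermiteGaussian, comp_apply, Pi.neg_apply]
  field_simp
  rw [sq_sqrt ha.le]
  ring

lemma creation_apply_of_hasDerivAt {j : Fin 3} {f : (Fin 3 → ℝ) → ℝ} {x : Fin 3 → ℝ} {f' : ℝ}
    (h : HasDerivAt (fun t => f (update x j t)) f' (x j)) :
    creation j f x = -f' + 2 * x j * f x := by
  simp only [creation, pd, h.deriv]

/-- `(A₁*)ⁿ e^{-yᵀCy}` in closed form, with `yᵀCy` written as a polynomial in `y 0`. -/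
noncomputable def excitedState (a : Fin 3 → Fin 3 → ℝ) (n : ℕ) (y : Fin 3 → ℝ) : ℝ :=
  √(1 + a 0 0) ^ n * hermiteGaussian (a 0 0) (a 0 1 * y 1 + a 0 2 * y 2)
    (a 1 1 * y 1 ^ 2 + a 2 2 * y 2 ^ 2 - 2 * a 1 2 * y 1 * y 2) n (y 0)

lemma creation_zero_excitedState {a : Fin 3 → Fin 3 → ℝ} (ha : 0 < 1 + a 0 0) (n : ℕ) :
    creation 0 (excitedState a n) = excitedState a (n + 1) := by
  funext x
  have hline : (fun t => excitedState a n (update x 0 t)) = fun t => √(1 + a 0 0) ^ n *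
      hermiteGaussian (a 0 0) (a 0 1 * x 1 + a 0 2 * x 2)
        (a 1 1 * x 1 ^ 2 + a 2 2 * x 2 ^ 2 - 2 * a 1 2 * x 1 * x 2) n t := by
    funext t
    simp [excitedState, update_of_ne]
  have hderiv := (hasDerivAt_hermiteGaussian ha (a 0 1 * x 1 + a 0 2 * x 2)
    (a 1 1 * x 1 ^ 2 + a 2 2 * x 2 ^ 2 - 2 * a 1 2 * x 1 * x 2) n (x 0)).const_mul
      (√(1 + a 0 0) ^ n)
  rw [← hline] at hderiv
  rw [creation_apply_of_hasDerivAt hderiv]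
  simp only [excitedState]
  ring

lemma quadForm_eq {a : Fin 3 → Fin 3 → ℝ} (hsymm : ∀ i j, a i j = a j i)
    {C : Matrix (Fin 3) (Fin 3) ℝ} (hC : ∀ i j, C i j = if i = j then a i i else -(a i j))
    (y : Fin 3 → ℝ) :
    ∑ i, ∑ j, y i * C i j * y j = a 0 0 * y 0 ^ 2 - 2 * (a 0 1 * y 1 + a 0 2 * y 2) * y 0
      + (a 1 1 * y 1 ^ 2 + a 2 2 * y 2 ^ 2 - 2 * a 1 2 * y 1 * y 2) := by
  simp only [Fin.sum_univ_three, hC]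
  norm_num [Fin.ext_iff, hsymm 1 0, hsymm 2 0, hsymm 2 1]
  ring

theorem stmt2 (a : Fin 3 → Fin 3 → ℝ) (hpos : ∀ i, 0 < a i i)
    (hsymm : ∀ i j, a i j = a j i)
    (C : Matrix (Fin 3) (Fin 3) ℝ)
    (hC : ∀ i j, C i j = if i = j then a i i else -(a i j))
    (r1 : ℕ) (x : Fin 3 → ℝ) :
    (creation 0)^[r1] (fun y => Real.exp (-(∑ i, ∑ j, y i * C i j * y j))) x
      = (1 + a 0 0) ^ ((r1 : ℝ)/2) *
        Hpoly r1 (((1 + a 0 0) * x 0 - a 0 1 * x 1 - a 0 2 * x 2) / Real.sqrt (1 + a 0 0)) *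
        Real.exp (-(∑ i, ∑ j, x i * C i j * x j)) := by
  have ha : 0 < 1 + a 0 0 := by linarith [hpos 0]
  have hground : (fun y => exp (-(∑ i, ∑ j, y i * C i j * y j))) = excitedState a 0 := by
    funext y
    simp [excitedState, hermiteGaussian, Hpoly_zero, quadForm_eq hsymm hC]
  have horbit : ∀ n, (creation 0)^[n] (excitedState a 0) = excitedState a n := by
    intro n
    induction n with
    | zero => rfl
    | succ n ih => rw [iterate_succ_apply', ih, creation_zero_excitedState ha]
  rw [hground, horbit, excitedState, hermiteGaussian, rpow_div_two_eq_sqrt _ ha.le, rpow_natCast,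
    quadForm_eq hsymm hC, sub_add_eq_sub_sub]
  ring_nf
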